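/- arXiv:1410.2909 — 3 statements merged into one kernel-verified Lean document; each statement's English description precedes it below -/
import Mathlib

section
/- Let (N,g) be an oriented two-dimensional Riemannian manifold, V a smooth vector field, and ∇ the metric connection defined by ∇_X Y = ∇^g_X Y + g(X,Y)V - g(V,Y)X. Then the curvature 2-forms satisfy K dVol_g = K^g dVol_g - d(⋆V^♭), where K is the Gaussian curvature of ∇, K^g is the Riemannian Gaussian curvature, ⋆ is the Hodge star and ♭ the musical isomorphism. -/
noncomputable section

/-- The two-dimensional chart on which the surface `(N, g)` is described. -/
abbrev E2 : Type := EuclideanSpace ℝ (Fin 2)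

/-- The Lie bracket of vector fields in a chart: `[X,Y] = dY(X) − dX(Y)`. -/
def lieBracketVF (X Y : E2 → E2) : E2 → E2 :=
  fun x => fderiv ℝ Y x (X x) - fderiv ℝ X x (Y x)

/-- The curvature operator `R(X,Y)Z = ∇_X ∇_Y Z − ∇_Y ∇_X Z − ∇_{[X,Y]} Z` of a
connection `D` on vector fields. -/
def curvVF (D : (E2 → E2) → (E2 → E2) → (E2 → E2)) (X Y Z : E2 → E2) : E2 → E2 :=
  fun x => D X (D Y Z) x - D Y (D X Z) x - D (lieBracketVF X Y) Z x

/-- Auxiliary: an orthonormal pair for a positive-definite metric on `E2` is a basis. -/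
theorem frame_basis
    (g : E2 → E2 →L[ℝ] E2 →L[ℝ] ℝ)
    (hsymm : ∀ x u v, g x u v = g x v u)
    (hpos : ∀ x u, u ≠ 0 → 0 < g x u u)
    (e₁ e₂ : E2 → E2)
    (hon₁ : ∀ x, g x (e₁ x) (e₁ x) = 1)
    (hon₂ : ∀ x, g x (e₂ x) (e₂ x) = 1)
    (hon₁₂ : ∀ x, g x (e₁ x) (e₂ x) = 0) :
    ∀ (x w : E2), w = g x (e₁ x) w • e₁ x + g x (e₂ x) w • e₂ x := by
  have hon₂₁ : ∀ x, g x (e₂ x) (e₁ x) = 0 := fun x => (hsymm x _ _).trans (hon₁₂ x)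
  intro x w
  set r := w - g x (e₁ x) w • e₁ x - g x (e₂ x) w • e₂ x with hr
  have hr1 : g x (e₁ x) r = 0 := by
    rw [hr]; simp [map_sub, map_smul, hon₁ x, hon₁₂ x, smul_eq_mul]
  have hr2 : g x (e₂ x) r = 0 := by
    rw [hr]; simp [map_sub, map_smul, hon₂ x, hon₂₁ x, smul_eq_mul]
  have hr0 : r = 0 := by
    by_contra h0
    have hind : LinearIndependent ℝ ![e₁ x, e₂ x, r] := by
      rw [Fintype.linearIndependent_iff]
      intro c hc
      have h1 : g x (e₁ x) (∑ i, c i • ![e₁ x, e₂ x, r] i) = 0 := by rw [hc]; simp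
      have h2 : g x (e₂ x) (∑ i, c i • ![e₁ x, e₂ x, r] i) = 0 := by rw [hc]; simp
      have h3 : g x r (∑ i, c i • ![e₁ x, e₂ x, r] i) = 0 := by rw [hc]; simp
      simp [Fin.sum_univ_three, map_add, map_smul, hon₁ x, hon₂ x, hon₁₂ x, hon₂₁ x,
        hr1, hr2, smul_eq_mul, hsymm x r (e₁ x), hsymm x r (e₂ x)] at h1 h2 h3
      have hrr := hpos x r h0
      intro i
      fin_cases i
      · simpa using h1
      · simpa using h2
      · simp only [Fin.isValue]
        rcases h3 with h3 | h3
        · exact h3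
        · exact absurd h3 (ne_of_gt hrr)
    have hcard := hind.fintype_card_le_finrank
    simp [finrank_euclideanSpace] at hcard
  have : w - (g x (e₁ x) w • e₁ x + g x (e₂ x) w • e₂ x) = 0 := by
    rw [← sub_sub]; exact hr0
  exact sub_eq_zero.mp this

/-- Auxiliary: the 1-form `⋆V♭` packaged as a continuous-linear-map–valued map. -/
def PhiCLM (g : E2 → E2 →L[ℝ] E2 →L[ℝ] ℝ) (V e₁ e₂ : E2 → E2) : E2 → E2 →L[ℝ] ℝ :=
  fun p => g p (V p) (e₁ p) • g p (e₂ p) - g p (V p) (e₂ p) • g p (e₁ p)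

set_option maxHeartbeats 2000000 in
/-- Let `(N,g)` be an oriented 2-dimensional Riemannian manifold with
(positively oriented) orthonormal frame `(e₁,e₂)`, `D = ∇ᵍ` its Levi-Civita connection, `V`
a vector field, and `Dn = ∇` the metric connection
`∇_X Y = ∇ᵍ_X Y + g(X,Y)V − g(V,Y)X`.  With Gaussian curvatures
`K = g(R(e₁,e₂)e₁, e₂)` of `∇` and `Kᵍ = g(Rᵍ(e₁,e₂)e₁, e₂)` of `∇ᵍ`, the Riemannian
volume form `vol = θ¹∧θ²`, and the 1-form `⋆V♭ = g(V,e₁)θ² − g(V,e₂)θ¹`, the curvature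
2-forms satisfy `K·dVol_g = Kᵍ·dVol_g − d(⋆V♭)`. -/
theorem curvature_two_form_identity
    (g : E2 → E2 →L[ℝ] E2 →L[ℝ] ℝ) (hg : ContDiff ℝ (⊤ : ℕ∞) g)
    (hsymm : ∀ x u v, g x u v = g x v u)
    (hpos : ∀ x u, u ≠ 0 → 0 < g x u u)
    (V : E2 → E2) (hV : ContDiff ℝ (⊤ : ℕ∞) V)
    (D : (E2 → E2) → (E2 → E2) → (E2 → E2))
    -- `D` is the Levi-Civita connection of `g`:
    (hDsmooth : ∀ X Y, ContDiff ℝ (⊤ : ℕ∞) X → ContDiff ℝ (⊤ : ℕ∞) Y → ContDiff ℝ (⊤ : ℕ∞) (D X Y))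
    (hDaddX : ∀ X X' Y, ∀ x, D (X + X') Y x = D X Y x + D X' Y x)
    (hDaddY : ∀ X Y Y', ∀ x, D X (Y + Y') x = D X Y x + D X Y' x)
    (hDtensX : ∀ (f : E2 → ℝ) X Y, ContDiff ℝ (⊤ : ℕ∞) f → ContDiff ℝ (⊤ : ℕ∞) X → ContDiff ℝ (⊤ : ℕ∞) Y →
      ∀ x, D (fun p => f p • X p) Y x = f x • D X Y x)
    (hDleibniz : ∀ (f : E2 → ℝ) X Y, ContDiff ℝ (⊤ : ℕ∞) f → ContDiff ℝ (⊤ : ℕ∞) X → ContDiff ℝ (⊤ : ℕ∞) Y →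
      ∀ x, D X (fun p => f p • Y p) x = fderiv ℝ f x (X x) • Y x + f x • D X Y x)
    (hDmetric : ∀ X Y Z : E2 → E2, ContDiff ℝ (⊤ : ℕ∞) X → ContDiff ℝ (⊤ : ℕ∞) Y → ContDiff ℝ (⊤ : ℕ∞) Z →
      ∀ x, fderiv ℝ (fun p => g p (Y p) (Z p)) x (X x)
        = g x (D X Y x) (Z x) + g x (Y x) (D X Z x))
    (hDtorsionfree : ∀ X Y : E2 → E2, ContDiff ℝ (⊤ : ℕ∞) X → ContDiff ℝ (⊤ : ℕ∞) Y →
      ∀ x, D X Y x - D Y X x = lieBracketVF X Y x)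
    -- the connection `∇` defined by `V`:
    (Dn : (E2 → E2) → (E2 → E2) → (E2 → E2))
    (hDn : ∀ (X Y : E2 → E2) (x : E2),
      Dn X Y x = D X Y x + g x (X x) (Y x) • V x - g x (V x) (Y x) • X x)
    -- an oriented orthonormal frame field:
    (e₁ e₂ : E2 → E2) (he₁ : ContDiff ℝ (⊤ : ℕ∞) e₁) (he₂ : ContDiff ℝ (⊤ : ℕ∞) e₂)
    (hon₁ : ∀ x, g x (e₁ x) (e₁ x) = 1)
    (hon₂ : ∀ x, g x (e₂ x) (e₂ x) = 1)
    (hon₁₂ : ∀ x, g x (e₁ x) (e₂ x) = 0)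
    -- the Gaussian curvatures of `∇` and `∇ᵍ`:
    (K Kg : E2 → ℝ)
    (hK : ∀ x, K x = g x (curvVF Dn e₁ e₂ e₁ x) (e₂ x))
    (hKg : ∀ x, Kg x = g x (curvVF D e₁ e₂ e₁ x) (e₂ x))
    -- the 1-form `⋆V♭ = g(V,e₁)θ² − g(V,e₂)θ¹`:
    (starVflat : E2 → E2 → ℝ)
    (hstar : ∀ x w, starVflat x w
        = g x (V x) (e₁ x) * g x (e₂ x) w - g x (V x) (e₂ x) * g x (e₁ x) w)
    -- the volume form `vol = θ¹ ∧ θ²` of the oriented frame: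
    (vol : E2 → E2 → E2 → ℝ)
    (hvol : ∀ x u v, vol x u v
        = g x (e₁ x) u * g x (e₂ x) v - g x (e₁ x) v * g x (e₂ x) u) :
    -- conclusion: `K dVol = Kᵍ dVol − d(⋆V♭)` as 2-forms
    ∀ x u v, K x * vol x u v
      = Kg x * vol x u v
        - (fderiv ℝ (fun p => starVflat p v) x u
            - fderiv ℝ (fun p => starVflat p u) x v) := by
  have hbasis := frame_basis g hsymm hpos e₁ e₂ hon₁ hon₂ hon₁₂
  have hon₂₁ : ∀ x, g x (e₂ x) (e₁ x) = 0 := fun x => (hsymm x _ _).trans (hon₁₂ x)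
  have hpair : ∀ (X Y : E2 → E2), ContDiff ℝ (⊤ : ℕ∞) X → ContDiff ℝ (⊤ : ℕ∞) Y →
      ContDiff ℝ (⊤ : ℕ∞) (fun p => g p (X p) (Y p)) := fun X Y hX hY => (hg.clm_apply hX).clm_apply hY
  -- metric-compatibility consequences
  have hm1 : ∀ (X : E2 → E2), ContDiff ℝ (⊤ : ℕ∞) X → ∀ y, g y (D X e₁ y) (e₁ y) = 0 := by
    intro X hX y
    have h := hDmetric X e₁ e₁ hX he₁ he₁ y
    rw [show (fun p => g p (e₁ p) (e₁ p)) = fun _ => (1:ℝ) from funext hon₁,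
      fderiv_const_apply] at h
    simp only [ContinuousLinearMap.zero_apply] at h
    have hs := hsymm y (e₁ y) (D X e₁ y)
    linarith
  have hm2 : ∀ (X : E2 → E2), ContDiff ℝ (⊤ : ℕ∞) X → ∀ y, g y (D X e₂ y) (e₂ y) = 0 := by
    intro X hX y
    have h := hDmetric X e₂ e₂ hX he₂ he₂ y
    rw [show (fun p => g p (e₂ p) (e₂ p)) = fun _ => (1:ℝ) from funext hon₂,
      fderiv_const_apply] at h
    simp only [ContinuousLinearMap.zero_apply] at h
    have hs := hsymm y (e₂ y) (D X e₂ y)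
    linarith
  have hm12 : ∀ (X : E2 → E2), ContDiff ℝ (⊤ : ℕ∞) X →
      ∀ y, g y (e₁ y) (D X e₂ y) = -(g y (D X e₁ y) (e₂ y)) := by
    intro X hX y
    have h := hDmetric X e₁ e₂ hX he₁ he₂ y
    rw [show (fun p => g p (e₁ p) (e₂ p)) = fun _ => (0:ℝ) from funext hon₁₂,
      fderiv_const_apply] at h
    simp only [ContinuousLinearMap.zero_apply] at h
    linarith
  -- connection-form representation
  have hrepr1 : ∀ (X : E2 → E2), ContDiff ℝ (⊤ : ℕ∞) X →
      ∀ y, D X e₁ y = g y (D X e₁ y) (e₂ y) • e₂ y := by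
    intro X hX y
    have hb := hbasis y (D X e₁ y)
    rw [hsymm y (e₁ y) (D X e₁ y), hm1 X hX y, hsymm y (e₂ y) (D X e₁ y)] at hb
    simpa using hb
  have hrepr2 : ∀ (X : E2 → E2), ContDiff ℝ (⊤ : ℕ∞) X →
      ∀ y, D X e₂ y = -(g y (D X e₁ y) (e₂ y)) • e₁ y := by
    intro X hX y
    have hb := hbasis y (D X e₂ y)
    rw [hm12 X hX y, hsymm y (e₂ y) (D X e₂ y), hm2 X hX y] at hb
    simpa using hb
  -- decomposition of V
  have hVdec : ∀ p, V p = g p (V p) (e₁ p) • e₁ p + g p (V p) (e₂ p) • e₂ p := by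
    intro p
    rw [hsymm p (V p) (e₁ p), hsymm p (V p) (e₂ p)]
    exact hbasis p (V p)
  -- the bracket field
  have hBfun : lieBracketVF e₁ e₂ = fun p => D e₁ e₂ p - D e₂ e₁ p :=
    funext fun p => (hDtorsionfree e₁ e₂ he₁ he₂ p).symm
  have hBs : ContDiff ℝ (⊤ : ℕ∞) (lieBracketVF e₁ e₂) := by
    rw [hBfun]; exact (hDsmooth e₁ e₂ he₁ he₂).sub (hDsmooth e₂ e₁ he₂ he₁)
  -- smoothness of connection coefficients
  have hω₂s : ContDiff ℝ (⊤ : ℕ∞) (fun p => g p (D e₂ e₁ p) (e₂ p)) :=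
    hpair _ _ (hDsmooth e₂ e₁ he₂ he₁) he₂
  have hω₁s : ContDiff ℝ (⊤ : ℕ∞) (fun p => g p (D e₁ e₁ p) (e₂ p)) :=
    hpair _ _ (hDsmooth e₁ e₁ he₁ he₁) he₂
  have hv₁s : ContDiff ℝ (⊤ : ℕ∞) (fun p => g p (V p) (e₁ p)) := hpair _ _ hV he₁
  have hv₂s : ContDiff ℝ (⊤ : ℕ∞) (fun p => g p (V p) (e₂ p)) := hpair _ _ hV he₂
  intro x u v
  -- ### the Riemannian curvature Kg
  have hKg' : Kg x = fderiv ℝ (fun p => g p (D e₂ e₁ p) (e₂ p)) x (e₁ x)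
      - fderiv ℝ (fun p => g p (D e₁ e₁ p) (e₂ p)) x (e₂ x)
      - g x (D (lieBracketVF e₁ e₂) e₁ x) (e₂ x) := by
    have h1 : D e₁ (D e₂ e₁) x
        = fderiv ℝ (fun p => g p (D e₂ e₁ p) (e₂ p)) x (e₁ x) • e₂ x
          + g x (D e₂ e₁ x) (e₂ x) • D e₁ e₂ x := by
      conv_lhs => rw [show D e₂ e₁ = fun p => g p (D e₂ e₁ p) (e₂ p) • e₂ p from
        funext (hrepr1 e₂ he₂)]
      exact hDleibniz _ e₁ e₂ hω₂s he₁ he₂ x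
    have h2 : D e₂ (D e₁ e₁) x
        = fderiv ℝ (fun p => g p (D e₁ e₁ p) (e₂ p)) x (e₂ x) • e₂ x
          + g x (D e₁ e₁ x) (e₂ x) • D e₂ e₂ x := by
      conv_lhs => rw [show D e₁ e₁ = fun p => g p (D e₁ e₁ p) (e₂ p) • e₂ p from
        funext (hrepr1 e₁ he₁)]
      exact hDleibniz _ e₂ e₂ hω₁s he₂ he₂ x
    rw [hKg x]
    simp only [curvVF]
    rw [h1, h2, hrepr2 e₁ he₁ x, hrepr2 e₂ he₂ x]
    simp only [map_add, map_sub, map_smul, ContinuousLinearMap.add_apply,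
      ContinuousLinearMap.sub_apply, ContinuousLinearMap.coe_smul', Pi.smul_apply,
      smul_eq_mul, hon₂ x, hon₁₂ x]
    ring
  -- ### the curvature K of the modified connection
  have hDn21 : Dn e₂ e₁ = fun p => (g p (D e₂ e₁ p) (e₂ p) - g p (V p) (e₁ p)) • e₂ p := by
    funext p
    rw [hDn e₂ e₁ p]
    conv_lhs => rw [hrepr1 e₂ he₂ p]
    rw [hon₂₁ p]
    module
  have hDn11 : Dn e₁ e₁ = fun p => (g p (D e₁ e₁ p) (e₂ p) + g p (V p) (e₂ p)) • e₂ p := by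
    funext p
    rw [hDn e₁ e₁ p]
    conv_lhs => rw [hrepr1 e₁ he₁ p, hon₁ p, hVdec p]
    simp only [map_add, map_smul, ContinuousLinearMap.add_apply,
      ContinuousLinearMap.coe_smul', Pi.add_apply, Pi.smul_apply,
      smul_eq_mul, hon₁ p, hon₂₁ p]
    module
  have hf₂s : ContDiff ℝ (⊤ : ℕ∞) (fun p => g p (D e₂ e₁ p) (e₂ p) - g p (V p) (e₁ p)) :=
    hω₂s.sub hv₁s
  have hf₁s : ContDiff ℝ (⊤ : ℕ∞) (fun p => g p (D e₁ e₁ p) (e₂ p) + g p (V p) (e₂ p)) :=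
    hω₁s.add hv₂s
  have hK' : K x = fderiv ℝ (fun p => g p (D e₂ e₁ p) (e₂ p) - g p (V p) (e₁ p)) x (e₁ x)
      - fderiv ℝ (fun p => g p (D e₁ e₁ p) (e₂ p) + g p (V p) (e₂ p)) x (e₂ x)
      - g x (D (lieBracketVF e₁ e₂) e₁ x) (e₂ x)
      - g x (lieBracketVF e₁ e₂ x) (e₁ x) * g x (V x) (e₂ x)
      + g x (V x) (e₁ x) * g x (lieBracketVF e₁ e₂ x) (e₂ x) := by
    have hA : D e₁ (fun p => (g p (D e₂ e₁ p) (e₂ p) - g p (V p) (e₁ p)) • e₂ p) x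
        = fderiv ℝ (fun p => g p (D e₂ e₁ p) (e₂ p) - g p (V p) (e₁ p)) x (e₁ x) • e₂ x
          + (g x (D e₂ e₁ x) (e₂ x) - g x (V x) (e₁ x)) • D e₁ e₂ x :=
      hDleibniz _ e₁ e₂ hf₂s he₁ he₂ x
    have hB : D e₂ (fun p => (g p (D e₁ e₁ p) (e₂ p) + g p (V p) (e₂ p)) • e₂ p) x
        = fderiv ℝ (fun p => g p (D e₁ e₁ p) (e₂ p) + g p (V p) (e₂ p)) x (e₂ x) • e₂ x
          + (g x (D e₁ e₁ x) (e₂ x) + g x (V x) (e₂ x)) • D e₂ e₂ x :=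
      hDleibniz _ e₂ e₂ hf₁s he₂ he₂ x
    rw [hK x]
    simp only [curvVF]
    rw [hDn e₁ (Dn e₂ e₁) x, hDn e₂ (Dn e₁ e₁) x, hDn (lieBracketVF e₁ e₂) e₁ x]
    simp only [hDn21, hDn11]
    rw [hA, hB, hrepr2 e₁ he₁ x, hrepr2 e₂ he₂ x]
    rw [show V x = g x (V x) (e₁ x) • e₁ x + g x (V x) (e₂ x) • e₂ x from hVdec x]
    simp only [map_add, map_sub, map_smul, ContinuousLinearMap.add_apply,
      ContinuousLinearMap.sub_apply, ContinuousLinearMap.coe_smul', Pi.smul_apply,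
      smul_eq_mul, hon₁ x, hon₂ x, hon₁₂ x, hon₂₁ x]
    ring
  -- ### derivative identities for Φ = ⋆V♭
  have hΦs : ContDiff ℝ (⊤ : ℕ∞) (PhiCLM g V e₁ e₂) :=
    (hv₁s.smul (hg.clm_apply he₂)).sub (hv₂s.smul (hg.clm_apply he₁))
  have hΦapp : ∀ p w, PhiCLM g V e₁ e₂ p w
      = g p (V p) (e₁ p) * g p (e₂ p) w - g p (V p) (e₂ p) * g p (e₁ p) w := by
    intro p w
    simp [PhiCLM, ContinuousLinearMap.sub_apply, ContinuousLinearMap.smul_apply, smul_eq_mul]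
  have hstarfd : ∀ (c w : E2), fderiv ℝ (fun p => starVflat p c) x w
      = fderiv ℝ (PhiCLM g V e₁ e₂) x w c := by
    intro c w
    have h0 : (fun p => starVflat p c) = fun p => PhiCLM g V e₁ e₂ p c :=
      funext fun p => by rw [hstar p c, hΦapp p c]
    rw [h0]
    have h2 : fderiv ℝ (fun p => PhiCLM g V e₁ e₂ p c) x
        = (PhiCLM g V e₁ e₂ x).comp (fderiv ℝ (fun _ : E2 => c) x)
          + (fderiv ℝ (PhiCLM g V e₁ e₂) x).flip c :=
      fderiv_clm_apply (hΦs.differentiable (by simp) x) (differentiableAt_const c)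
    rw [h2]
    simp [ContinuousLinearMap.flip_apply]
  have hfield : ∀ (Y : E2 → E2), ContDiff ℝ (⊤ : ℕ∞) Y → ∀ w,
      fderiv ℝ (fun p => PhiCLM g V e₁ e₂ p (Y p)) x w
        = PhiCLM g V e₁ e₂ x (fderiv ℝ Y x w) + fderiv ℝ (PhiCLM g V e₁ e₂) x w (Y x) := by
    intro Y hY w
    have h2 : fderiv ℝ (fun p => PhiCLM g V e₁ e₂ p (Y p)) x
        = (PhiCLM g V e₁ e₂ x).comp (fderiv ℝ Y x)
          + (fderiv ℝ (PhiCLM g V e₁ e₂) x).flip (Y x) :=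
      fderiv_clm_apply (hΦs.differentiable (by simp) x) (hY.differentiable (by simp) x)
    rw [h2]
    simp [ContinuousLinearMap.flip_apply]
  have hΦe₂ : (fun p => PhiCLM g V e₁ e₂ p (e₂ p)) = fun p => g p (V p) (e₁ p) := by
    funext p
    rw [hΦapp p (e₂ p), hon₂ p, hon₁₂ p]
    ring
  have hΦe₁ : (fun p => PhiCLM g V e₁ e₂ p (e₁ p)) = fun p => -(g p (V p) (e₂ p)) := by
    funext p
    rw [hΦapp p (e₁ p), hon₁ p, hon₂₁ p]
    ring
  have hdv₁ : fderiv ℝ (fun p => g p (V p) (e₁ p)) x (e₁ x)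
      = PhiCLM g V e₁ e₂ x (fderiv ℝ e₂ x (e₁ x))
        + fderiv ℝ (PhiCLM g V e₁ e₂) x (e₁ x) (e₂ x) := by
    rw [← hΦe₂]; exact hfield e₂ he₂ (e₁ x)
  have hdv₂ : fderiv ℝ (fun p => g p (V p) (e₂ p)) x (e₂ x)
      = -(PhiCLM g V e₁ e₂ x (fderiv ℝ e₁ x (e₂ x))
        + fderiv ℝ (PhiCLM g V e₁ e₂) x (e₂ x) (e₁ x)) := by
    have h := hfield e₁ he₁ (e₂ x)
    rw [hΦe₁, fderiv_fun_neg] at h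
    simp only [ContinuousLinearMap.neg_apply] at h
    linarith
  have hΦB : PhiCLM g V e₁ e₂ x (lieBracketVF e₁ e₂ x)
      = PhiCLM g V e₁ e₂ x (fderiv ℝ e₂ x (e₁ x))
        - PhiCLM g V e₁ e₂ x (fderiv ℝ e₁ x (e₂ x)) := by
    rw [show lieBracketVF e₁ e₂ x = fderiv ℝ e₂ x (e₁ x) - fderiv ℝ e₁ x (e₂ x) from rfl,
      map_sub]
  have hΦBval : PhiCLM g V e₁ e₂ x (lieBracketVF e₁ e₂ x)
      = g x (V x) (e₁ x) * g x (e₂ x) (lieBracketVF e₁ e₂ x)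
        - g x (V x) (e₂ x) * g x (e₁ x) (lieBracketVF e₁ e₂ x) := hΦapp x _
  -- derivatives of the sums/differences of coefficients
  have hdf₂ : fderiv ℝ (fun p => g p (D e₂ e₁ p) (e₂ p) - g p (V p) (e₁ p)) x (e₁ x)
      = fderiv ℝ (fun p => g p (D e₂ e₁ p) (e₂ p)) x (e₁ x)
        - fderiv ℝ (fun p => g p (V p) (e₁ p)) x (e₁ x) := by
    rw [fderiv_fun_sub (hω₂s.differentiable (by simp) x) (hv₁s.differentiable (by simp) x)]
    simp
  have hdf₁ : fderiv ℝ (fun p => g p (D e₁ e₁ p) (e₂ p) + g p (V p) (e₂ p)) x (e₂ x)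
      = fderiv ℝ (fun p => g p (D e₁ e₁ p) (e₂ p)) x (e₂ x)
        + fderiv ℝ (fun p => g p (V p) (e₂ p)) x (e₂ x) := by
    rw [fderiv_fun_add (hω₁s.differentiable (by simp) x) (hv₂s.differentiable (by simp) x)]
    simp
  -- ### the frame identity
  have key : K x = Kg x - (fderiv ℝ (PhiCLM g V e₁ e₂) x (e₁ x) (e₂ x)
      - fderiv ℝ (PhiCLM g V e₁ e₂) x (e₂ x) (e₁ x)) := by
    rw [hK', hKg', hdf₂, hdf₁, hdv₁, hdv₂]
    have hs₁ := hsymm x (lieBracketVF e₁ e₂ x) (e₁ x)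
    have hs₂ := hsymm x (lieBracketVF e₁ e₂ x) (e₂ x)
    have hcomb := hΦB.symm.trans hΦBval
    linear_combination (-1 : ℝ) * hcomb + g x (V x) (e₁ x) * hs₂ - g x (V x) (e₂ x) * hs₁
  -- ### conclusion by bilinearity
  rw [hstarfd v u, hstarfd u v, hvol x u v]
  obtain ⟨a₁, a₂, rfl⟩ : ∃ a b : ℝ, u = a • e₁ x + b • e₂ x := ⟨_, _, hbasis x u⟩
  obtain ⟨b₁, b₂, rfl⟩ : ∃ a b : ℝ, v = a • e₁ x + b • e₂ x := ⟨_, _, hbasis x v⟩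
  simp only [map_add, map_smul, ContinuousLinearMap.add_apply,
    ContinuousLinearMap.coe_smul', Pi.smul_apply, smul_eq_mul,
    hon₁ x, hon₂ x, hon₁₂ x, hon₂₁ x]
  linear_combination (a₁ * b₂ - a₂ * b₁) * key
end
end

section
/- Let (N,g) be a two-dimensional Riemannian manifold, V a smooth vector field, and ∇ the metric connection defined by ∇_X Y = ∇^g_X Y + g(X,Y)V - g(V,Y)X. If γ is a ∇-geodesic (∇_{γ̇}γ̇ = 0), then its Riemannian geodesic curvature κ = |∇^g_{γ̇}γ̇|/|γ̇|² satisfies κ² = |V|² - g(V,γ̇)²/|γ̇|². In particular κ ≤ |V|. -/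
noncomputable section

/-- Let `(N,g)` be a 2-dimensional Riemannian manifold (in a chart, with
Levi-Civita Christoffel operator `Chr`), `V` a vector field, and `∇` the metric connection
`∇_X Y = ∇ᵍ_X Y + g(X,Y)V − g(V,Y)X`.  If `γ` is a `∇`-geodesic, then its Riemannian
geodesic curvature `κ = |∇ᵍ_γ̇ γ̇|_g / |γ̇|²_g` satisfies
`κ² = |V|²_g − g(V,γ̇)²/|γ̇|²_g`; in particular `κ ≤ |V|_g`. -/
theorem geodesic_curvature_of_V_geodesic
    (g : E2 → E2 →L[ℝ] E2 →L[ℝ] ℝ) (hg : ContDiff ℝ (⊤ : ℕ∞) g)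
    (hsymm : ∀ x u v, g x u v = g x v u)
    (hpos : ∀ x u, u ≠ 0 → 0 < g x u u)
    (Chr : E2 → E2 →L[ℝ] E2 →L[ℝ] E2)
    (hmetric : ∀ x u v w, fderiv ℝ (fun p => g p v w) x u
        = g x (Chr x u v) w + g x v (Chr x u w))
    (htorsionfree : ∀ x u v, Chr x u v = Chr x v u)
    (V : E2 → E2) (hV : ContDiff ℝ (⊤ : ℕ∞) V)
    (γ : ℝ → E2) (hγ : ContDiff ℝ 2 γ)
    (hreg : ∀ t, deriv γ t ≠ 0)
    -- `γ` is a geodesic of `∇`: `∇ᵍ_γ̇ γ̇ + g(γ̇,γ̇) V − g(V,γ̇) γ̇ = 0`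
    (hgeo : ∀ t, deriv (deriv γ) t + Chr (γ t) (deriv γ t) (deriv γ t)
        + g (γ t) (deriv γ t) (deriv γ t) • V (γ t)
        - g (γ t) (V (γ t)) (deriv γ t) • deriv γ t = 0)
    (κ : ℝ → ℝ)
    (hκ : ∀ t, κ t = Real.sqrt (g (γ t)
          (deriv (deriv γ) t + Chr (γ t) (deriv γ t) (deriv γ t))
          (deriv (deriv γ) t + Chr (γ t) (deriv γ t) (deriv γ t)))
        / g (γ t) (deriv γ t) (deriv γ t)) :
    ∀ t, κ t ^ 2 = g (γ t) (V (γ t)) (V (γ t))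
        - g (γ t) (V (γ t)) (deriv γ t) ^ 2 / g (γ t) (deriv γ t) (deriv γ t)
      ∧ κ t ≤ Real.sqrt (g (γ t) (V (γ t)) (V (γ t))) := by
  intro t
  set x := γ t with hx
  set u := deriv γ t with hu
  set v := V x with hv
  set A := deriv (deriv γ) t + Chr x u u with hA
  set q := g x u u with hq
  set c := g x v u with hc
  have hg0 : ∀ w, 0 ≤ g x w w := by
    intro w
    rcases eq_or_ne w 0 with h | h
    · simp [h]
    · exact (hpos x w h).le
  have hqpos : 0 < q := hpos x u (hreg t)
  have hAeq : A = c • u - q • v := by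
    have h := hgeo t
    simp only [← hx, ← hu, ← hv, ← hq, ← hc, ← hA] at h
    have h2 : A - (c • u - q • v) = 0 := by
      rw [← h]; abel
    exact sub_eq_zero.mp h2
  have hguv : g x u v = c := hsymm x u v
  have hgAA : g x A A = q * (q * g x v v - c * c) := by
    rw [hAeq]
    simp only [map_sub, map_smul, ContinuousLinearMap.sub_apply,
      ContinuousLinearMap.smul_apply, smul_eq_mul, hguv]
    ring
  have hgvv0 : 0 ≤ g x v v := hg0 v
  have hgAA0 : 0 ≤ g x A A := hg0 A
  have hkey : q * g x v v - c * c ≥ 0 := by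
    nlinarith [hgAA0, hgAA]
  have hκt : κ t = Real.sqrt (g x A A) / q := hκ t
  have hκ2 : κ t ^ 2 = g x v v - c ^ 2 / q := by
    rw [hκt, div_pow, Real.sq_sqrt hgAA0, hgAA]
    field_simp
  have hc2 : c = g x v u := rfl
  refine ⟨by rw [hκ2, hc2], ?_⟩
  have hκnn : 0 ≤ κ t := by
    rw [hκt]
    exact div_nonneg (Real.sqrt_nonneg _) hqpos.le
  rw [Real.le_sqrt hκnn hgvv0]
  rw [hκ2]
  have : 0 ≤ c ^ 2 / q := div_nonneg (sq_nonneg c) hqpos.le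
  linarith

end
end

section
/- Let γ:[0,ℓ]→ℝ² be a unit-speed curve in the Euclidean plane whose curvature satisfies |κ(t)| ≤ Λ for all t. If ℓ < 2/Λ, then t ↦ |γ(t) − γ(0)| is strictly increasing on [0,ℓ], and the length satisfies d ≤ ℓ ≤ (2/Λ) arcsin(Λ d / 2), where d = |γ(ℓ) − γ(0)|. -/
open Real Set
open scoped RealInnerProductSpace

/-!
Write `T = γ'` for the unit tangent; it moves with speed at most `Λ`.

Crudely, `‖T s - T t‖ ≤ Λ |s - t|` gives `⟪T s, T t⟫ ≥ 1 - Λ² (s - t)² / 2`, and integrating in `s`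
yields `d/dt ‖γ t - γ 0‖² = 2 ⟪γ t - γ 0, T t⟫ ≥ 2 (t - Λ² t³ / 6) > 0`: this is monotonicity.

Sharply, identify the plane with `ℂ` and let `t₀ = ℓ / 2`. Since `|T t - T t₀| ≤ Λ ℓ / 2 < 1`, the
quotient `T t / T t₀` stays in the slit plane, so `log (T t / T t₀)` is differentiable with
derivative `T' / T` of modulus at most `Λ`. Hence the angle between `T t` and `T t₀` is at most
`Λ |t - t₀|`, i.e. `⟪T t, T t₀⟫ ≥ cos (Λ (t - t₀))`, and integrating over `[0, ℓ]` gives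
`d ≥ ⟪γ ℓ - γ 0, T t₀⟫ ≥ (2 / Λ) sin (Λ ℓ / 2)`, which is the arcsine bound.
-/

theorem abs_arg_div_le_of_norm_deriv_le {z z' : ℝ → ℂ} {s : Set ℝ} {Λ t₀ : ℝ} (hs : Convex ℝ s)
    (hz : ∀ t ∈ s, HasDerivWithinAt z (z' t) s t) (hunit : ∀ t ∈ s, ‖z t‖ = 1)
    (hbound : ∀ t ∈ s, ‖z' t‖ ≤ Λ) (ht₀ : t₀ ∈ s) (hnear : ∀ t ∈ s, Λ * |t - t₀| < 1)
    {t : ℝ} (ht : t ∈ s) : |Complex.arg (z t / z t₀)| ≤ Λ * |t - t₀| := by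
  have hz₀ : z t₀ ≠ 0 := norm_ne_zero_iff.1 (by rw [hunit t₀ ht₀]; exact one_ne_zero)
  have hslit (u : ℝ) (hu : u ∈ s) : z u / z t₀ ∈ Complex.slitPlane := by
    have hclose : ‖z u / z t₀ - 1‖ < 1 := by
      rw [div_sub_one hz₀, norm_div, hunit t₀ ht₀, div_one]
      exact (hs.norm_image_sub_le_of_norm_hasDerivWithin_le hz hbound ht₀ hu).trans_lt (hnear u hu)
    simpa using Complex.mem_slitPlane_of_norm_lt_one hclose
  have hlog (u : ℝ) (hu : u ∈ s) :
      HasDerivWithinAt (fun u => Complex.log (z u / z t₀)) (z' u / z u) s u := by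
    convert ((hz u hu).div_const (z t₀)).clog_real (hslit u hu) using 1
    field_simp
  have hlog_bound (u : ℝ) (hu : u ∈ s) : ‖z' u / z u‖ ≤ Λ := by
    rw [norm_div, hunit u hu, div_one]
    exact hbound u hu
  have hmvt := hs.norm_image_sub_le_of_norm_hasDerivWithin_le hlog hlog_bound ht₀ ht
  rw [div_self hz₀, Complex.log_one, sub_zero, Real.norm_eq_abs] at hmvt
  calc |Complex.arg (z t / z t₀)| = |(Complex.log (z t / z t₀)).im| := by rw [Complex.log_im]
    _ ≤ ‖Complex.log (z t / z t₀)‖ := Complex.abs_im_le_norm _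
    _ ≤ Λ * |t - t₀| := hmvt

theorem integral_one_sub_mul_abs_sq_div_two (Λ t : ℝ) :
    ∫ s in (0)..t, (1 - (Λ * |s - t|) ^ 2 / 2) = t - Λ ^ 2 * t ^ 3 / 6 := by
  simp only [mul_pow, sq_abs]
  rw [intervalIntegral.integral_sub intervalIntegrable_const
    ((by fun_prop : Continuous fun s : ℝ => Λ ^ 2 * (s - t) ^ 2 / 2).intervalIntegrable _ _)]
  simp [intervalIntegral.integral_div, intervalIntegral.integral_comp_sub_right fun s => s ^ 2]
  ring

section InnerProductSpace

variable {E : Type*} [NormedAddCommGroup E] [InnerProductSpace ℝ E] {γ T T' : ℝ → E} {Λ ℓ : ℝ}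

theorem one_sub_sq_div_two_le_inner {x y : E} {r : ℝ} (hx : ‖x‖ = 1) (hy : ‖y‖ = 1)
    (hxy : ‖x - y‖ ≤ r) : 1 - r ^ 2 / 2 ≤ ⟪x, y⟫ := by
  have h := norm_sub_sq_real x y
  rw [hx, hy] at h
  nlinarith [norm_nonneg (x - y)]

theorem inner_sub_eq_integral_inner (hγ : ∀ t, HasDerivAt γ (T t) t) (hT : Continuous T)
    (v : E) (a b : ℝ) : ⟪γ b - γ a, v⟫ = ∫ t in a..b, ⟪T t, v⟫ := by
  have hderiv (t : ℝ) : HasDerivAt (fun s => ⟪γ s, v⟫) ⟪T t, v⟫ t := by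
    simpa using (hγ t).inner ℝ (hasDerivAt_const t v)
  rw [inner_sub_left, intervalIntegral.integral_eq_sub_of_hasDerivAt (fun t _ => hderiv t)
    ((hT.inner continuous_const).intervalIntegrable a b)]

theorem sub_mul_cube_le_inner_sub (hγ : ∀ t, HasDerivAt γ (T t) t) (hT : Continuous T)
    (hunit : ∀ t ∈ Icc 0 ℓ, ‖T t‖ = 1)
    (hlip : ∀ s ∈ Icc 0 ℓ, ∀ t ∈ Icc 0 ℓ, ‖T s - T t‖ ≤ Λ * |s - t|)
    {t : ℝ} (ht : t ∈ Icc 0 ℓ) : t - Λ ^ 2 * t ^ 3 / 6 ≤ ⟪γ t - γ 0, T t⟫ := by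
  rw [inner_sub_eq_integral_inner hγ hT, ← integral_one_sub_mul_abs_sq_div_two]
  refine intervalIntegral.integral_mono_on ht.1
    ((by fun_prop : Continuous _).intervalIntegrable _ _)
    ((hT.inner continuous_const).intervalIntegrable _ _) fun s hs => ?_
  have hs' : s ∈ Icc 0 ℓ := ⟨hs.1, hs.2.trans ht.2⟩
  exact one_sub_sq_div_two_le_inner (hunit s hs') (hunit t ht) (hlip s hs' t ht)

theorem strictMonoOn_norm_sub_of_norm_sub_le (hγ : ∀ t, HasDerivAt γ (T t) t)
    (hT : Continuous T) (hunit : ∀ t ∈ Icc 0 ℓ, ‖T t‖ = 1)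
    (hlip : ∀ s ∈ Icc 0 ℓ, ∀ t ∈ Icc 0 ℓ, ‖T s - T t‖ ≤ Λ * |s - t|)
    (hshort : (Λ * ℓ) ^ 2 < 6) : StrictMonoOn (fun t => ‖γ t - γ 0‖) (Icc 0 ℓ) := by
  have hsq : StrictMonoOn (fun t => ‖γ t - γ 0‖ ^ 2) (Icc 0 ℓ) := by
    refine strictMonoOn_of_hasDerivWithinAt_pos (convex_Icc 0 ℓ)
      (fun t _ => ((hγ t).sub_const (γ 0)).norm_sq.continuousAt.continuousWithinAt)
      (fun t _ => ((hγ t).sub_const (γ 0)).norm_sq.hasDerivWithinAt) fun t ht => ?_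
    rw [interior_Icc] at ht
    have hinner := sub_mul_cube_le_inner_sub hγ hT hunit hlip (Ioo_subset_Icc_self ht)
    have hΛt : (Λ * t) ^ 2 < 6 := lt_of_le_of_lt
      (by rw [mul_pow, mul_pow]; gcongr; exacts [ht.1.le, ht.2.le]) hshort
    nlinarith [ht.1]
  exact fun s hs t ht hst => (pow_lt_pow_iff_left₀ (norm_nonneg _) (norm_nonneg _)
    two_ne_zero).1 (hsq hs ht hst)

theorem cos_le_inner_of_norm_deriv_le (e : E →ₗᵢ[ℝ] ℂ) {s : Set ℝ} {t₀ : ℝ} (hs : Convex ℝ s)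
    (hT' : ∀ t ∈ s, HasDerivWithinAt T (T' t) s t) (hunit : ∀ t ∈ s, ‖T t‖ = 1)
    (hcurv : ∀ t ∈ s, ‖T' t‖ ≤ Λ) (ht₀ : t₀ ∈ s) (hnear : ∀ t ∈ s, Λ * |t - t₀| < 1)
    {t : ℝ} (ht : t ∈ s) : cos (Λ * (t - t₀)) ≤ ⟪T t, T t₀⟫ := by
  have hΛ : 0 ≤ Λ := (norm_nonneg _).trans (hcurv t₀ ht₀)
  set z : ℝ → ℂ := fun u => e (T u)
  have hzunit (u : ℝ) (hu : u ∈ s) : ‖z u‖ = 1 := by simp [z, hunit u hu]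
  have harg : |Complex.arg (z t / z t₀)| ≤ Λ * |t - t₀| :=
    abs_arg_div_le_of_norm_deriv_le (z' := fun u => e (T' u)) hs
      (fun u hu => e.toContinuousLinearMap.hasFDerivAt.comp_hasDerivWithinAt u (hT' u hu))
      hzunit (fun u hu => by simpa using hcurv u hu) ht₀ hnear ht
  have hw : ‖z t / z t₀‖ = 1 := by rw [norm_div, hzunit t ht, hzunit t₀ ht₀, div_one]
  have hre : ⟪T t, T t₀⟫ = cos (Complex.arg (z t / z t₀)) := by
    rw [Complex.cos_arg (norm_ne_zero_iff.1 (hw ▸ one_ne_zero)), hw, div_one, real_inner_comm,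
      ← e.inner_map_map, Complex.inner, div_eq_mul_inv, Complex.inv_eq_conj (hzunit t₀ ht₀)]
  rw [hre, ← cos_abs (Λ * _), ← cos_abs (Complex.arg _)]
  refine cos_le_cos_of_nonneg_of_le_pi (abs_nonneg _) ?_ ?_
  · rw [abs_mul, abs_of_nonneg hΛ]
    linarith [hnear t ht, pi_gt_three]
  · rwa [abs_mul, abs_of_nonneg hΛ]

theorem two_div_mul_sin_le_norm_sub (e : E →ₗᵢ[ℝ] ℂ) (hΛ : 0 < Λ) (hℓ : 0 ≤ ℓ)
    (hshort : Λ * ℓ < 2) (hγ : ∀ t, HasDerivAt γ (T t) t) (hT : Continuous T)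
    (hT' : ∀ t ∈ Icc 0 ℓ, HasDerivWithinAt T (T' t) (Icc 0 ℓ) t)
    (hunit : ∀ t ∈ Icc 0 ℓ, ‖T t‖ = 1) (hcurv : ∀ t ∈ Icc 0 ℓ, ‖T' t‖ ≤ Λ) :
    2 / Λ * sin (Λ * ℓ / 2) ≤ ‖γ ℓ - γ 0‖ := by
  set t₀ := ℓ / 2 with ht₀def
  have ht₀ : t₀ ∈ Icc 0 ℓ := ⟨by positivity, by linarith⟩
  have hnear (t : ℝ) (ht : t ∈ Icc 0 ℓ) : Λ * |t - t₀| < 1 := by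
    have : |t - t₀| ≤ ℓ / 2 := abs_le.2 ⟨by linarith [ht.1], by linarith [ht.2]⟩
    nlinarith
  have hcos : ∫ t in (0)..ℓ, cos (Λ * (t - t₀)) = 2 / Λ * sin (Λ * ℓ / 2) := by
    simp only [mul_sub]
    rw [intervalIntegral.integral_comp_mul_sub (fun x => cos x) hΛ.ne', integral_cos, mul_zero,
      zero_sub, sin_neg, smul_eq_mul, ht₀def]
    ring_nf
  calc 2 / Λ * sin (Λ * ℓ / 2) = ∫ t in (0)..ℓ, cos (Λ * (t - t₀)) := hcos.symm
    _ ≤ ∫ t in (0)..ℓ, ⟪T t, T t₀⟫ :=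
      intervalIntegral.integral_mono_on hℓ ((by fun_prop : Continuous _).intervalIntegrable _ _)
        ((hT.inner continuous_const).intervalIntegrable _ _) fun t ht =>
          cos_le_inner_of_norm_deriv_le e (convex_Icc 0 ℓ) hT' hunit hcurv ht₀ hnear ht
    _ = ⟪γ ℓ - γ 0, T t₀⟫ := (inner_sub_eq_integral_inner hγ hT _ 0 ℓ).symm
    _ ≤ ‖γ ℓ - γ 0‖ := by simpa [hunit t₀ ht₀] using real_inner_le_norm (γ ℓ - γ 0) (T t₀)

end InnerProductSpace

/-- Let `γ : [0,ℓ] → ℝ²` be a unit-speed `C²` planar curve whose curvature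
satisfies `|κ(t)| ≤ Λ` (for a unit-speed curve, `|κ(t)| = ‖γ̈(t)‖`).  If `ℓ < 2/Λ`, then
`t ↦ ‖γ(t) − γ(0)‖` is strictly increasing on `[0,ℓ]`, and with `d = ‖γ(ℓ) − γ(0)‖` one has
`d ≤ ℓ ≤ (2/Λ)·arcsin(Λd/2)`. -/
theorem bounded_curvature_curve_length
    (γ : ℝ → EuclideanSpace ℝ (Fin 2)) (Λ ℓ : ℝ)
    (hΛ : 0 < Λ) (hℓ : 0 < ℓ) (hshort : ℓ < 2 / Λ)
    (hγ : ContDiff ℝ 2 γ)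
    (hspeed : ∀ t ∈ Set.Icc (0:ℝ) ℓ, ‖deriv γ t‖ = 1)
    (hcurv : ∀ t ∈ Set.Icc (0:ℝ) ℓ, ‖deriv (deriv γ) t‖ ≤ Λ) :
    StrictMonoOn (fun t => ‖γ t - γ 0‖) (Set.Icc 0 ℓ) ∧
    ‖γ ℓ - γ 0‖ ≤ ℓ ∧
    ℓ ≤ (2 / Λ) * Real.arcsin (Λ * ‖γ ℓ - γ 0‖ / 2) := by
  have hΛℓ : Λ * ℓ < 2 := by rwa [lt_div_iff₀ hΛ, mul_comm] at hshort
  have hγ' (t : ℝ) : HasDerivAt γ (deriv γ t) t := (hγ.differentiable two_ne_zero t).hasDerivAt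
  have hT (t : ℝ) : HasDerivWithinAt (deriv γ) (deriv (deriv γ) t) (Icc 0 ℓ) t :=
    (hγ.differentiable_deriv_two t).hasDerivAt.hasDerivWithinAt
  have hTc : Continuous (deriv γ) := hγ.continuous_deriv one_le_two
  have hlip (s : ℝ) (hs : s ∈ Icc 0 ℓ) (t : ℝ) (ht : t ∈ Icc 0 ℓ) :
      ‖deriv γ s - deriv γ t‖ ≤ Λ * |s - t| :=
    (convex_Icc 0 ℓ).norm_image_sub_le_of_norm_hasDerivWithin_le (fun u _ => hT u) hcurv ht hs
  have hchord := two_div_mul_sin_le_norm_sub Complex.orthonormalBasisOneI.repr.symm.toLinearIsometry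
    hΛ hℓ.le hΛℓ hγ' hTc (fun t _ => hT t) hspeed hcurv
  refine ⟨strictMonoOn_norm_sub_of_norm_sub_le hγ' hTc hspeed hlip (by nlinarith [mul_pos hΛ hℓ]),
    ?_, ?_⟩
  · simpa using norm_image_sub_le_of_norm_deriv_le_segment' (fun t _ => (hγ' t).hasDerivWithinAt)
      (fun t ht => (hspeed t (Ico_subset_Icc_self ht)).le) ℓ ⟨hℓ.le, le_rfl⟩
  · have hsin : sin (Λ * ℓ / 2) ≤ Λ * ‖γ ℓ - γ 0‖ / 2 := by
      rw [div_mul_eq_mul_div, div_le_iff₀ hΛ] at hchord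
      linarith
    have hangle : Λ * ℓ / 2 ≤ arcsin (Λ * ‖γ ℓ - γ 0‖ / 2) := by
      refine (le_arcsin_iff_sin_le' ⟨?_, ?_⟩).2 hsin <;> linarith [pi_gt_three, mul_pos hΛ hℓ]
    calc ℓ = 2 / Λ * (Λ * ℓ / 2) := by field_simp
      _ ≤ 2 / Λ * arcsin (Λ * ‖γ ℓ - γ 0‖ / 2) := by gcongr
end
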